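/- arXiv:2004.08081 — 2 statements merged into one kernel-verified Lean document; each statement's English description precedes it below -/
import Mathlib

section
/- Let ω = e^{2πi/3}. The subgroup of GL₅(ℂ) generated by the diagonal matrices D₁ = diag(1,ω,1,ω,ω), D₂ = diag(1,1,ω,ω,ω), D₃ = diag(1,1,1,ω,ω²) and the matrix Ψ(J) = (1/3)·[[-1,-2,-2,-2,-2],[-1,1,-2,1,1],[-1,-2,1,1,1],[-1,1,1,1,-2],[-1,1,1,-2,1]] acts irreducibly on ℂ⁵. -/
/-!
The diagonal matrices `D₁, D₂, D₃` have pairwise distinct joint eigenvalues on the five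
coordinate lines, so polynomials in them realise every coordinate projection, and an invariant
subspace is spanned by the coordinate vectors it contains. Since `Ψ(J)` has no zero entry, it
maps a coordinate vector to a vector with full support, so a nonzero invariant subspace contains
every coordinate vector.
-/

open Matrix

noncomputable section

def ω : ℂ := Complex.exp (2 * Real.pi * Complex.I / 3)

def D1 : Matrix (Fin 5) (Fin 5) ℂ := Matrix.diagonal ![1, ω, 1, ω, ω]
def D2 : Matrix (Fin 5) (Fin 5) ℂ := Matrix.diagonal ![1, 1, ω, ω, ω]
def D3 : Matrix (Fin 5) (Fin 5) ℂ := Matrix.diagonal ![1, 1, 1, ω, ω^2]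

def PsiJ : Matrix (Fin 5) (Fin 5) ℂ :=
  (1/3 : ℂ) • !![-1,-2,-2,-2,-2; -1,1,-2,1,1; -1,-2,1,1,1; -1,1,1,1,-2; -1,1,1,-2,1]

namespace Submodule

variable {R ι : Type*} [CommSemiring R]

def multipliers (V : Submodule R (ι → R)) : Subalgebra R (ι → R) where
  carrier := {c | ∀ v ∈ V, c * v ∈ V}
  mul_mem' {c d} hc hd v hv := by simpa only [mul_assoc] using hc _ (hd v hv)
  add_mem' {c d} hc hd v hv := by simpa only [add_mul] using V.add_mem (hc v hv) (hd v hv)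
  algebraMap_mem' r v hv := by
    simpa only [Algebra.algebraMap_eq_smul_one, smul_mul_assoc, one_mul] using V.smul_mem r hv

theorem mem_multipliers_iff_diagonal [Fintype ι] [DecidableEq ι] {V : Submodule R (ι → R)}
    {d : ι → R} : d ∈ V.multipliers ↔ ∀ v ∈ V, diagonal d *ᵥ v ∈ V := by
  have hd : ∀ v, diagonal d *ᵥ v = d * v := fun v => funext fun i => mulVec_diagonal d v i
  simp only [hd]
  rfl

end Submodule

section Separation

variable {K ι : Type*} [Field K] [DecidableEq ι]

theorem Subalgebra.pi_single_one_mem_of_separates [Fintype ι] {S : Subalgebra K (ι → K)}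
    (hS : ∀ i j, i ≠ j → ∃ d ∈ S, d i ≠ d j) (i : ι) : Pi.single i 1 ∈ S := by
  have hkill : ∀ j, ∃ e ∈ S, e i = 1 ∧ (j ≠ i → e j = 0) := by
    intro j
    by_cases hj : j = i
    · exact ⟨1, S.one_mem, rfl, fun h => (h hj).elim⟩
    obtain ⟨d, hdS, hd⟩ := hS i j (Ne.symm hj)
    refine ⟨(d i - d j)⁻¹ • (d - algebraMap K _ (d j)),
      S.smul_mem (S.sub_mem hdS (S.algebraMap_mem _)) _, ?_, fun _ => ?_⟩
    · simp [inv_mul_cancel₀ (sub_ne_zero.mpr hd)]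
    · simp
  choose e heS he using hkill
  convert S.prod_mem fun j (_ : j ∈ Finset.univ) => heS j
  ext k
  rw [Finset.prod_apply]
  by_cases hk : k = i
  · subst hk
    simp [fun j => (he j).1]
  · rw [Pi.single_eq_of_ne hk]
    exact (Finset.prod_eq_zero (f := fun j => e j k) (Finset.mem_univ k) ((he k).2 hk)).symm

theorem Submodule.pi_single_mem_of_single_mem {V : Submodule K (ι → K)} {j : ι} {c : K}
    (hc : c ≠ 0) (h : Pi.single j c ∈ V) : Pi.single j 1 ∈ V := by
  rw [← V.smul_mem_iff hc, ← Pi.single_smul', smul_eq_mul, mul_one]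
  exact h

theorem Submodule.eq_top_of_forall_pi_single_mem [Fintype ι] {V : Submodule K (ι → K)}
    (h : ∀ j, Pi.single j 1 ∈ V) : V = ⊤ := by
  rw [eq_top_iff, ← (Pi.basisFun K ι).span_eq, Submodule.span_le]
  rintro _ ⟨j, rfl⟩
  simpa using h j

theorem Submodule.eq_bot_or_eq_top_of_nowhere_zero [Fintype ι] {V : Submodule K (ι → K)}
    (hproj : ∀ v ∈ V, ∀ i, Pi.single i (v i) ∈ V) {M : Matrix ι ι K}
    (hM : ∀ v ∈ V, M *ᵥ v ∈ V) (hM0 : ∀ i j, M i j ≠ 0) : V = ⊥ ∨ V = ⊤ := by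
  refine or_iff_not_imp_left.mpr fun hbot => ?_
  obtain ⟨v, hv, hv0⟩ := V.ne_bot_iff.mp hbot
  obtain ⟨i, hvi⟩ : ∃ i, v i ≠ 0 := Function.ne_iff.mp hv0
  have hi : Pi.single i 1 ∈ V := pi_single_mem_of_single_mem hvi (hproj v hv i)
  refine eq_top_of_forall_pi_single_mem fun j => pi_single_mem_of_single_mem (hM0 j i) ?_
  simpa [mulVec_single_one] using hproj _ (hM _ hi) j

end Separation

theorem ω_isPrimitiveRoot : IsPrimitiveRoot ω 3 := by
  simpa [ω] using Complex.isPrimitiveRoot_exp 3 (by norm_num)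

def diagonalWeights : Set (Fin 5 → ℂ) := {![1, ω, 1, ω, ω], ![1, 1, ω, ω, ω], ![1, 1, 1, ω, ω ^ 2]}

theorem diagonalWeights_separate (i j : Fin 5) (hij : i ≠ j) :
    ∃ d ∈ diagonalWeights, d i ≠ d j := by
  have h01 : ω ≠ 1 := by simpa using ω_isPrimitiveRoot.pow_inj (i := 1) (j := 0)
  have h02 : ω ^ 2 ≠ 1 := by simpa using ω_isPrimitiveRoot.pow_inj (i := 2) (j := 0)
  have h12 : ω ^ 2 ≠ ω := by simpa using ω_isPrimitiveRoot.pow_inj (i := 2) (j := 1)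
  simp only [diagonalWeights, Set.mem_insert_iff, Set.mem_singleton_iff, exists_eq_or_imp,
    exists_eq_left]
  fin_cases i <;> fin_cases j <;>
    simp_all [h01.symm, h02.symm, h12.symm]

theorem PsiJ_ne_zero (i j : Fin 5) : PsiJ i j ≠ 0 := by
  fin_cases i <;> fin_cases j <;> norm_num [PsiJ]

/-- The subgroup of `GL₅(ℂ)` generated by `D₁, D₂, D₃` and `Ψ(J)` acts irreducibly on
`ℂ⁵`: any subspace invariant under the four generators is `⊥` or `⊤`. -/
theorem burkhardt_representation_irreducible :
    ∀ V : Submodule ℂ (Fin 5 → ℂ),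
      (∀ M ∈ ({D1, D2, D3, PsiJ} : Set (Matrix (Fin 5) (Fin 5) ℂ)),
        ∀ v ∈ V, M.mulVec v ∈ V) →
      V = ⊥ ∨ V = ⊤ := by
  intro V hV
  have hweights : diagonalWeights ⊆ V.multipliers := by
    simp only [diagonalWeights, Set.insert_subset_iff, Set.singleton_subset_iff, SetLike.mem_coe,
      Submodule.mem_multipliers_iff_diagonal]
    exact ⟨hV D1 (by simp), hV D2 (by simp), hV D3 (by simp)⟩
  have hsep : ∀ i j, i ≠ j → ∃ d ∈ V.multipliers, d i ≠ d j := fun i j hij =>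
    (diagonalWeights_separate i j hij).imp fun _ ⟨hd, hne⟩ => ⟨hweights hd, hne⟩
  have hproj : ∀ v ∈ V, ∀ i, Pi.single i (v i) ∈ V := fun v hv i => by
    simpa [← Pi.single_mul_left] using
      Subalgebra.pi_single_one_mem_of_separates hsep i v hv
  exact V.eq_bot_or_eq_top_of_nowhere_zero hproj (hV PsiJ (by simp)) PsiJ_ne_zero

end
end

section
/- The Burkhardt invariant B₄(T₀,...,T₄) = T₀⁴ + 8·T₀·(T₁³+T₂³+T₃³+T₄³) + 48·T₁T₂T₃T₄ is invariant under the linear substitutions given by diag(1,ω,1,ω,ω), diag(1,1,ω,ω,ω), diag(1,1,1,ω,ω²) for ω = e^{2πi/3}, and under the substitution given by the matrix Ψ(J) = (1/3)·[[-1,-2,-2,-2,-2],[-1,1,-2,1,1],[-1,-2,1,1,1],[-1,1,1,1,-2],[-1,1,1,-2,1]] up to the factor det(Ψ(J))⁻¹ absorbed in the normalization, i.e., B₄((T₀,...,T₄)·Ψ(J)ᵗ) = B₄(T₀,...,T₄). -/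
open Matrix

noncomputable section

/-- The degree 4 Burkhardt invariant `B₄`. -/
def B4 (T : Fin 5 → ℂ) : ℂ :=
  T 0 ^ 4 + 8 * T 0 * (T 1 ^ 3 + T 2 ^ 3 + T 3 ^ 3 + T 4 ^ 3) +
    48 * (T 1 * T 2 * T 3 * T 4)

/-! The diagonal substitutions rescale `T₀ Tᵢ³` by a cube of a cube root of unity and
`T₁T₂T₃T₄` by the product of the diagonal entries, which is `ω³ = 1` in each case; for `Ψ(J)`
the invariance is a polynomial identity after expanding `Ψ(J) T`. -/

lemma omega_pow_three : ω ^ 3 = 1 := by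
  simpa [ω] using (Complex.isPrimitiveRoot_exp 3 three_ne_zero).pow_eq_one

lemma B4_diagonal_mulVec {a b c d : ℂ} (ha : a ^ 3 = 1) (hb : b ^ 3 = 1) (hc : c ^ 3 = 1)
    (hd : d ^ 3 = 1) (habcd : a * b * c * d = 1) (T : Fin 5 → ℂ) :
    B4 (diagonal ![1, a, b, c, d] *ᵥ T) = B4 T := by
  simp only [B4, mulVec_diagonal, Fin.isValue, cons_val_zero, one_mul, cons_val_one, cons_val]
  linear_combination 8 * T 0 * (T 1 ^ 3 * ha + T 2 ^ 3 * hb + T 3 ^ 3 * hc + T 4 ^ 3 * hd) +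
    48 * (T 1 * T 2 * T 3 * T 4) * habcd

lemma PsiJ_mulVec (T : Fin 5 → ℂ) :
    PsiJ *ᵥ T = ![(-T 0 - 2 * T 1 - 2 * T 2 - 2 * T 3 - 2 * T 4) / 3,
      (-T 0 + T 1 - 2 * T 2 + T 3 + T 4) / 3, (-T 0 - 2 * T 1 + T 2 + T 3 + T 4) / 3,
      (-T 0 + T 1 + T 2 + T 3 - 2 * T 4) / 3, (-T 0 + T 1 + T 2 - 2 * T 3 + T 4) / 3] := by
  ext i
  fin_cases i <;> simp [PsiJ, mulVec, dotProduct, Fin.sum_univ_five] <;> ring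

lemma B4_PsiJ_mulVec (T : Fin 5 → ℂ) : B4 (PsiJ *ᵥ T) = B4 T := by
  rw [PsiJ_mulVec]
  simp only [B4, Fin.isValue, cons_val_zero, cons_val_one, cons_val]
  ring

/-- `B₄` is invariant under the substitutions given by `D₁, D₂, D₃` and `Ψ(J)`. -/
theorem B4_invariant :
    ∀ T : Fin 5 → ℂ,
      B4 (D1.mulVec T) = B4 T ∧ B4 (D2.mulVec T) = B4 T ∧
      B4 (D3.mulVec T) = B4 T ∧ B4 (PsiJ.mulVec T) = B4 T := by
  intro T
  have hω := omega_pow_three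
  have hω2 : (ω ^ 2) ^ 3 = 1 := by rw [← pow_mul, pow_mul', hω, one_pow]
  refine ⟨?_, ?_, ?_, B4_PsiJ_mulVec T⟩
  · exact B4_diagonal_mulVec hω (one_pow 3) hω hω (by linear_combination hω) T
  · exact B4_diagonal_mulVec (one_pow 3) hω hω hω (by linear_combination hω) T
  · exact B4_diagonal_mulVec (one_pow 3) (one_pow 3) hω hω2 (by linear_combination hω) T
end
end
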